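/- arXiv:2002.00483 — 2 statements merged into one kernel-verified Lean document; each statement's English description precedes it below -/
import Mathlib

section
/- Let N be a normal network on X, and let a and b be distinct elements of X such that {a, b} is either a cherry or a reticulated cherry of N in which b is the reticulation leaf. If N' is obtained from N by deleting b, then N' is a normal network on X − {b}. -/
/-- A (raw) phylogenetic network structure: a vertex type, an arc relation
(arcs are directed; since `arc` is a relation there are no parallel arcs),
and a labelling of the (potential) leaves by elements of `α`. -/
structure PhyloNet (α : Type) : Type 1 where
  V : Type
  arc : V → V → Prop
  leafMap : α → V

namespace PhyloNet

variable {α : Type}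

/-- In-degree of a vertex. -/
noncomputable def inDeg (N : PhyloNet α) (v : N.V) : ℕ := {u : N.V | N.arc u v}.ncard

/-- Out-degree of a vertex. -/
noncomputable def outDeg (N : PhyloNet α) (v : N.V) : ℕ := {u : N.V | N.arc v u}.ncard

/-- A leaf is a vertex of out-degree zero. -/
def IsLeaf (N : PhyloNet α) (v : N.V) : Prop := N.outDeg v = 0

/-- A reticulation is a vertex of in-degree two. -/
def IsRet (N : PhyloNet α) (v : N.V) : Prop := N.inDeg v = 2

/-- A tree vertex has in-degree one and out-degree two. -/
def IsTreeVert (N : PhyloNet α) (v : N.V) : Prop := N.inDeg v = 1 ∧ N.outDeg v = 2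

/-- A root: in-degree zero and every vertex is reachable from it. -/
def IsRoot (N : PhyloNet α) (r : N.V) : Prop :=
  N.inDeg r = 0 ∧ ∀ v : N.V, Relation.ReflTransGen N.arc r v

/-- `N` is a rooted binary phylogenetic network on the (nonempty, finite) leaf set `X`. -/
structure IsNetworkOn (N : PhyloNet α) (X : Finset α) : Prop where
  nonemptyX : X.Nonempty
  finiteV : Finite N.V
  acyclic : ∀ v : N.V, ¬ Relation.TransGen N.arc v v
  rooted : ∃ r : N.V, N.IsRoot r
  leaf_isLeaf : ∀ x ∈ X, N.IsLeaf (N.leafMap x)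
  leaf_inj : ∀ x ∈ X, ∀ y ∈ X, N.leafMap x = N.leafMap y → x = y
  leaf_surj : ∀ v : N.V, N.IsLeaf v → ∃ x ∈ X, N.leafMap x = v
  degrees : (X.card = 1 ∧ Subsingleton N.V) ∨
    (∀ v : N.V,
      (N.inDeg v = 0 ∧ N.outDeg v = 2) ∨ (N.inDeg v = 1 ∧ N.outDeg v = 0) ∨
      (N.inDeg v = 1 ∧ N.outDeg v = 2) ∨ (N.inDeg v = 2 ∧ N.outDeg v = 1))

/-- A phylogenetic tree is a phylogenetic network with no reticulations. -/
def IsTree (N : PhyloNet α) : Prop := ∀ v : N.V, ¬ N.IsRet v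

/-- Tree-child: every non-leaf vertex has a child that is not a reticulation
(i.e. a child that is a tree vertex or a leaf). -/
def TreeChild (N : PhyloNet α) : Prop :=
  ∀ v : N.V, ¬ N.IsLeaf v → ∃ w : N.V, N.arc v w ∧ ¬ N.IsRet w

/-- A shortcut: a reticulation arc `(u, v)` such that there is a directed path
from `u` to `v` avoiding the arc `(u, v)`. -/
def Shortcut (N : PhyloNet α) (u v : N.V) : Prop :=
  N.arc u v ∧ N.IsRet v ∧
    Relation.TransGen (fun p q => N.arc p q ∧ ¬(p = u ∧ q = v)) u v

/-- Normal: tree-child with no shortcuts. -/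
def Normal (N : PhyloNet α) : Prop := N.TreeChild ∧ ∀ u v : N.V, ¬ N.Shortcut u v

/-- Temporal: there is a time map, with positive values, that is constant on
reticulation arcs and strictly increasing on tree arcs. -/
def Temporal (N : PhyloNet α) : Prop :=
  ∃ t : N.V → ℝ, (∀ v : N.V, 0 < t v) ∧
    ∀ u v : N.V, N.arc u v → ((N.IsRet v → t u = t v) ∧ (¬ N.IsRet v → t u < t v))

/-- A system of directed paths in `N` with prescribed endpoints, pairwise
internally vertex-disjoint (two different paths meet only in common endpoints). -/
def PathSys (N : PhyloNet α) (es : List (N.V × N.V)) : Prop :=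
  ∃ P : N.V × N.V → List N.V,
    (∀ e ∈ es, (P e).Chain' N.arc ∧ (P e).head? = some e.1 ∧ (P e).getLast? = some e.2) ∧
    (∀ e ∈ es, ∀ e' ∈ es, e ≠ e' → ∀ w ∈ P e, w ∈ P e' →
      (w = e.1 ∨ w = e.2) ∧ (w = e'.1 ∨ w = e'.2))

/-- `N` displays the triple `xy|z`: a subdivision of the caterpillar `(x, y, z)`
is a subgraph of `N`. -/
def DisplaysTriple (N : PhyloNet α) (X : Finset α) (x y z : α) : Prop :=
  x ∈ X ∧ y ∈ X ∧ z ∈ X ∧ x ≠ y ∧ x ≠ z ∧ y ≠ z ∧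
  ∃ r v : N.V, ([r, v, N.leafMap x, N.leafMap y, N.leafMap z]).Pairwise (· ≠ ·) ∧
    N.PathSys [(r, v), (v, N.leafMap x), (v, N.leafMap y), (r, N.leafMap z)]

/-- `N` displays the quad (caterpillar) `(x₁, x₂, x₃, x₄)`: a subdivision of the
caterpillar on four leaves is a subgraph of `N`. -/
def DisplaysQuad (N : PhyloNet α) (X : Finset α) (x₁ x₂ x₃ x₄ : α) : Prop :=
  x₁ ∈ X ∧ x₂ ∈ X ∧ x₃ ∈ X ∧ x₄ ∈ X ∧
  x₁ ≠ x₂ ∧ x₁ ≠ x₃ ∧ x₁ ≠ x₄ ∧ x₂ ≠ x₃ ∧ x₂ ≠ x₄ ∧ x₃ ≠ x₄ ∧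
  ∃ r q p : N.V,
    ([r, q, p, N.leafMap x₁, N.leafMap x₂, N.leafMap x₃, N.leafMap x₄]).Pairwise (· ≠ ·) ∧
    N.PathSys [(r, q), (q, p), (p, N.leafMap x₁), (p, N.leafMap x₂),
               (q, N.leafMap x₃), (r, N.leafMap x₄)]

/-- `N` displays the phylogenetic tree `T` with leaf set `X'`: a subdivision of
`T` is a subgraph of `N`, with the leaves labelled consistently. -/
def Displays (N T : PhyloNet α) (X' : Finset α) : Prop :=
  ∃ (f : T.V → N.V) (P : T.V → T.V → List N.V),
    Function.Injective f ∧
    (∀ x ∈ X', f (T.leafMap x) = N.leafMap x) ∧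
    (∀ u v : T.V, T.arc u v →
      (P u v).Chain' N.arc ∧ (P u v).head? = some (f u) ∧ (P u v).getLast? = some (f v)) ∧
    (∀ u v u' v' : T.V, T.arc u v → T.arc u' v' → (u, v) ≠ (u', v') →
      ∀ w : N.V, w ∈ P u v → w ∈ P u' v' →
        (w = f u ∨ w = f v) ∧ (w = f u' ∨ w = f v')) ∧
    (∀ u v w : T.V, T.arc u v → f w ∈ P u v → w = u ∨ w = v)

/-- Isomorphism of two phylogenetic networks on `X`: an arc-preserving bijection
of the vertex sets fixing every leaf label in `X`. -/
def Isom (N N' : PhyloNet α) (X : Finset α) : Prop :=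
  ∃ φ : N.V ≃ N'.V, (∀ x ∈ X, φ (N.leafMap x) = N'.leafMap x) ∧
    ∀ u v : N.V, N.arc u v ↔ N'.arc (φ u) (φ v)

/-- `{a, b}` is a cherry: the leaves `a` and `b` have the same parent. -/
def Cherry (N : PhyloNet α) (a b : α) : Prop :=
  a ≠ b ∧ ∃ p : N.V, N.arc p (N.leafMap a) ∧ N.arc p (N.leafMap b)

/-- `{a, b}` is a reticulated cherry with reticulation leaf `b`:
the parent of `b` is a reticulation and there is an arc from the parent of `a`
to the parent of `b`. -/
def RetCherry (N : PhyloNet α) (a b : α) : Prop :=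
  a ≠ b ∧ ∃ pa pb : N.V, N.arc pa (N.leafMap a) ∧ N.arc pb (N.leafMap b) ∧
    N.IsRet pb ∧ N.arc pa pb

/-- `{a, b, c}` is a double-reticulated cherry with reticulation leaf `b`. -/
def DoubleRetCherry (N : PhyloNet α) (a b c : α) : Prop :=
  a ≠ b ∧ b ≠ c ∧ a ≠ c ∧
  ∃ pa pb pc : N.V, N.arc pa (N.leafMap a) ∧ N.arc pb (N.leafMap b) ∧
    N.arc pc (N.leafMap c) ∧ N.IsRet pb ∧ N.arc pa pb ∧ N.arc pc pb

/-- There is a directed path from `a` to `b` that avoids the vertex `u` entirely. -/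
def AvoidReach (N : PhyloNet α) (u a b : N.V) : Prop :=
  a ≠ u ∧ b ≠ u ∧ Relation.ReflTransGen (fun p q => N.arc p q ∧ p ≠ u ∧ q ≠ u) a b

/-- The visibility set of a vertex `u`: the leaves `x ∈ X` such that every
directed path from the root to `x` traverses `u`. -/
def visSet (N : PhyloNet α) (X : Finset α) (u : N.V) : Set α :=
  {x | x ∈ X ∧ ∀ r : N.V, N.IsRoot r → ¬ N.AvoidReach u r (N.leafMap x)}

/-- The cluster set of a vertex `u`: the leaves `x ∈ X` reachable from `u`. -/
def clusterSet (N : PhyloNet α) (X : Finset α) (u : N.V) : Set α :=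
  {x | x ∈ X ∧ Relation.ReflTransGen N.arc u (N.leafMap x)}

/-- A tree path from `u` to `v`: a directed path in which every vertex except
`v` (and possibly `u`) is a tree vertex. -/
def TreePathTo (N : PhyloNet α) (u v : N.V) : Prop :=
  ∃ l : List N.V, l.Chain' N.arc ∧ l.head? = some u ∧ l.getLast? = some v ∧
    ∀ w ∈ l, w ≠ u → w ≠ v → N.IsTreeVert w

/-- A candidate set for `b` (relative to `a`). -/
def CandidateSet (N : PhyloNet α) (X : Finset α) (a b : α) (W : Set α) : Prop :=
  W.Nonempty ∧ W ⊆ (↑X : Set α) \ {a, b} ∧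
  (∀ c ∈ W, ∀ x ∈ X, x ∉ W → x ≠ b →
    N.DisplaysTriple X b c x ∧ ¬ N.DisplaysTriple X a c b) ∧
  (∀ c ∈ W, ∀ c' ∈ W, c ≠ c' → ¬ N.DisplaysTriple X b c c') ∧
  (∀ c ∈ W, ∀ x ∈ X, x ∉ W → x ≠ a → x ≠ b → ¬ N.DisplaysQuad X x b c a)

/-- `N'` is obtained from `N` by deleting the leaf `b` of the cherry `{a, b}`
(with common parent `p`): delete `b` and its incident arc, and suppress `p`. -/
def DelCherry (N N' : PhyloNet α) (X : Finset α) (a b : α) : Prop :=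
  ∃ (p : N.V) (j : N'.V → N.V),
    N.arc p (N.leafMap a) ∧ N.arc p (N.leafMap b) ∧
    Function.Injective j ∧
    (∀ x ∈ X, x ≠ b → j (N'.leafMap x) = N.leafMap x) ∧
    (∀ v : N.V, v ≠ p → v ≠ N.leafMap b → ∃ w : N'.V, j w = v) ∧
    (∀ w : N'.V, j w ≠ p ∧ j w ≠ N.leafMap b) ∧
    (∀ u v : N'.V, N'.arc u v ↔
      (N.arc (j u) (j v) ∨ (N.arc (j u) p ∧ N.arc p (j v))))

/-- `N'` is obtained from `N` by deleting the reticulation leaf `b` of the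
reticulated cherry `{a, b}`: delete `b`, its parent `pb` and their incident
arcs, and suppress the parent `pa` of `a` and the other parent `gb` of `pb`. -/
def DelRetCherry (N N' : PhyloNet α) (X : Finset α) (a b : α) : Prop :=
  ∃ (pa pb gb : N.V) (j : N'.V → N.V),
    N.arc pa (N.leafMap a) ∧ N.arc pb (N.leafMap b) ∧ N.IsRet pb ∧
    N.arc pa pb ∧ N.arc gb pb ∧ gb ≠ pa ∧
    Function.Injective j ∧
    (∀ x ∈ X, x ≠ b → j (N'.leafMap x) = N.leafMap x) ∧
    (∀ v : N.V, v ∉ ({pa, pb, gb, N.leafMap b} : Set N.V) → ∃ w : N'.V, j w = v) ∧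
    (∀ w : N'.V, j w ∉ ({pa, pb, gb, N.leafMap b} : Set N.V)) ∧
    (∀ u v : N'.V, N'.arc u v ↔
      (N.arc (j u) (j v) ∨ (N.arc (j u) pa ∧ N.arc pa (j v)) ∨
       (N.arc (j u) gb ∧ N.arc gb (j v))))

/-- `N'` is obtained from `N` by deleting the reticulation leaf `b` of the
double-reticulated cherry `{a, b, c}`: delete `b`, `pb` and their incident
arcs, and suppress `pa` and `pc`. -/
def DelDoubleRetCherry (N N' : PhyloNet α) (X : Finset α) (a b c : α) : Prop :=
  ∃ (pa pb pc : N.V) (j : N'.V → N.V),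
    N.arc pa (N.leafMap a) ∧ N.arc pb (N.leafMap b) ∧ N.arc pc (N.leafMap c) ∧
    N.IsRet pb ∧ N.arc pa pb ∧ N.arc pc pb ∧
    Function.Injective j ∧
    (∀ x ∈ X, x ≠ b → j (N'.leafMap x) = N.leafMap x) ∧
    (∀ v : N.V, v ∉ ({pa, pb, pc, N.leafMap b} : Set N.V) → ∃ w : N'.V, j w = v) ∧
    (∀ w : N'.V, j w ∉ ({pa, pb, pc, N.leafMap b} : Set N.V)) ∧
    (∀ u v : N'.V, N'.arc u v ↔
      (N.arc (j u) (j v) ∨ (N.arc (j u) pa ∧ N.arc pa (j v)) ∨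
       (N.arc (j u) pc ∧ N.arc pc (j v))))

end PhyloNet

/-!
Both deletions are instances of one operation: delete a set `D` of vertices closed under taking
children (`b`, and also `p_b` for a reticulated cherry) and suppress a set `S` of vertices, each
with a unique parent and a unique child outside `D` (`p_a`, and also `g_b` for a reticulated
cherry). Such an operation preserves the in- and out-degree of every surviving vertex and turns
arcs of `N'` into paths of `N`, so `N'` is again a binary network; a child of `N` that is not a
reticulation yields one of `N'`, and a shortcut of `N'` lifts to a shortcut of `N`.
Normality is what makes a reticulated cherry fit this pattern: the two parents `p_a`, `g_b` of
`p_b` are incomparable (otherwise an arc into `p_b` is a shortcut), so neither is the root or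
adjacent to the other, and `g_b` has a second child, which is not a reticulation. A cherry whose
parent is the root is the whole network, and then `N'` is the single leaf `a`.
-/

lemma Set.eq_or_eq_of_ncard_eq_two {β : Type*} {s : Set β} (h : s.ncard = 2) {x y z : β}
    (hx : x ∈ s) (hy : y ∈ s) (hxy : x ≠ y) (hz : z ∈ s) : z = x ∨ z = y := by
  obtain ⟨c, d, -, rfl⟩ := Set.ncard_eq_two.mp h
  simp only [Set.mem_insert_iff, Set.mem_singleton_iff] at hx hy hz
  grind

lemma Set.ncard_eq_ncard_of_image_eq {β γ δ : Type*} {A : Set β} {B : Set γ} {j : β → δ}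
    {f : γ → δ} (hj : Function.Injective j) (hf : Set.InjOn f B) (h : j '' A = f '' B) :
    A.ncard = B.ncard := by
  rw [← Set.ncard_image_of_injective A hj, h, hf.ncard_image]

lemma Relation.ReflTransGen.avoiding_of_not_reflTransGen {β : Type*} {r : β → β → Prop}
    {u v w : β} (huw : Relation.ReflTransGen r u w) (hvw : ¬ Relation.ReflTransGen r v w) :
    Relation.ReflTransGen (fun p q => r p q ∧ ¬(p = u ∧ q = v)) u w := by
  induction huw with
  | refl => exact .refl
  | @tail y z _ hyz ih =>
    exact (ih fun hvy => hvw (hvy.tail hyz)).tail ⟨hyz, fun ⟨_, hzv⟩ => hvw (hzv ▸ .refl)⟩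

namespace PhyloNet

variable {α : Type} {N N' : PhyloNet α} {X : Finset α} {a b : α}

lemma not_arc_of_inDeg_eq_zero [Finite N.V] {v : N.V} (h : N.inDeg v = 0) (u : N.V) :
    ¬ N.arc u v :=
  fun huv => Set.notMem_empty u (((Set.ncard_eq_zero (Set.toFinite _)).mp h).subset huv)

lemma not_arc_of_isLeaf [Finite N.V] {v : N.V} (h : N.IsLeaf v) (u : N.V) : ¬ N.arc v u :=
  fun hvu => Set.notMem_empty u (((Set.ncard_eq_zero (Set.toFinite _)).mp h).subset hvu)

lemma exists_arc_iff_of_inDeg_eq_one {v : N.V} (h : N.inDeg v = 1) :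
    ∃ q, ∀ x, N.arc x v ↔ x = q := by
  obtain ⟨q, hq⟩ := Set.ncard_eq_one.mp h
  exact ⟨q, fun x => Set.ext_iff.mp hq x⟩

lemma arc_iff_of_inDeg_eq_one {u v : N.V} (h : N.inDeg v = 1) (huv : N.arc u v) (x : N.V) :
    N.arc x v ↔ x = u := by
  obtain ⟨q, hq⟩ := exists_arc_iff_of_inDeg_eq_one h
  rw [hq, (hq u).mp huv]

lemma inDeg_eq_one_of_arc_iff {u v : N.V} (h : ∀ x, N.arc x v ↔ x = u) : N.inDeg v = 1 :=
  Set.ncard_eq_one.mpr ⟨u, Set.ext h⟩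

lemma eq_or_eq_of_outDeg_eq_two {v x y z : N.V} (h : N.outDeg v = 2) (hx : N.arc v x)
    (hy : N.arc v y) (hxy : x ≠ y) (hz : N.arc v z) : z = x ∨ z = y :=
  Set.eq_or_eq_of_ncard_eq_two h hx hy hxy hz

lemma eq_or_eq_of_inDeg_eq_two {v x y z : N.V} (h : N.inDeg v = 2) (hx : N.arc x v)
    (hy : N.arc y v) (hxy : x ≠ y) (hz : N.arc z v) : z = x ∨ z = y :=
  Set.eq_or_eq_of_ncard_eq_two h hx hy hxy hz

lemma two_le_outDeg [Finite N.V] {v x y : N.V} (hx : N.arc v x) (hy : N.arc v y)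
    (hxy : x ≠ y) : 2 ≤ N.outDeg v := by
  rw [← Set.ncard_pair hxy]
  exact Set.ncard_le_ncard (Set.insert_subset hx (Set.singleton_subset_iff.mpr hy))

lemma eq_of_isRoot_of_inDeg_eq_zero [Finite N.V] {r v : N.V} (hr : N.IsRoot r)
    (h : N.inDeg v = 0) : v = r := by
  rcases (hr.2 v).cases_tail with rfl | ⟨u, -, huv⟩
  · rfl
  · exact absurd huv (not_arc_of_inDeg_eq_zero h u)

lemma eq_of_reflTransGen_of_isLeaf [Finite N.V] {v w : N.V} (h : N.IsLeaf v)
    (hvw : Relation.ReflTransGen N.arc v w) : w = v := by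
  rcases hvw.cases_head with rfl | ⟨u, hvu, -⟩
  · rfl
  · exact absurd hvu (not_arc_of_isLeaf h u)

def IsBinary (N : PhyloNet α) : Prop := ∀ v : N.V,
  (N.inDeg v = 0 ∧ N.outDeg v = 2) ∨ (N.inDeg v = 1 ∧ N.outDeg v = 0) ∨
  (N.inDeg v = 1 ∧ N.outDeg v = 2) ∨ (N.inDeg v = 2 ∧ N.outDeg v = 1)

lemma IsNetworkOn.isBinary (hN : N.IsNetworkOn X) (ha : a ∈ X) (hb : b ∈ X) (hab : a ≠ b) :
    N.IsBinary :=
  hN.degrees.resolve_left fun h => by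
    have := Finset.one_lt_card.mpr ⟨a, ha, b, hb, hab⟩
    omega

lemma eq_of_outDeg_eq_one [Finite N.V] {v x y : N.V} (h : N.outDeg v = 1) (hx : N.arc v x)
    (hy : N.arc v y) : x = y :=
  (Set.ncard_le_one_iff (Set.toFinite _)).mp h.le hx hy

lemma IsNetworkOn.ne_of_arc (hN : N.IsNetworkOn X) {u v : N.V} (h : N.arc u v) : u ≠ v := by
  rintro rfl
  exact hN.acyclic u (.single h)

lemma ne_of_arc_of_isLeaf [Finite N.V] {l u v : N.V} (hl : N.IsLeaf l) (h : N.arc u v) :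
    u ≠ l := by
  rintro rfl
  exact not_arc_of_isLeaf hl v h

lemma not_reflTransGen_of_isRet (hac : ∀ v, ¬ Relation.TransGen N.arc v v)
    (hsc : ∀ u v, ¬ N.Shortcut u v) {u w v : N.V} (huv : N.arc u v) (hwv : N.arc w v)
    (hret : N.IsRet v) (hwu : w ≠ u) : ¬ Relation.ReflTransGen N.arc u w := fun huw =>
  hsc u v ⟨huv, hret, .tail' (huw.avoiding_of_not_reflTransGen fun hvw => hac v (.tail' hvw hwv))
    ⟨hwv, fun h => hwu h.1⟩⟩

lemma exists_parent_and_child_of_isRet (hN : N.IsNetworkOn X) (hbin : N.IsBinary)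
    (hnorm : N.Normal) {u v : N.V} (huv : N.arc u v) (hret : N.IsRet v) :
    ∃ q c, (∀ x, N.arc x u ↔ x = q) ∧ c ≠ v ∧ (∀ x, N.arc x c ↔ x = u) ∧
      ∀ z, N.arc u z → z = v ∨ z = c := by
  have := hN.finiteV
  obtain ⟨c, huc, hc⟩ := hnorm.1 u (fun h => not_arc_of_isLeaf h v huv)
  have hcv : c ≠ v := fun h => hc (h ▸ hret)
  have hu_out := two_le_outDeg huc huv hcv
  obtain ⟨r, hr⟩ := hN.rooted
  have hu_in : N.inDeg u ≠ 0 := by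
    intro h0
    obtain ⟨w, hwv, hwu⟩ := Set.exists_ne_of_one_lt_ncard (show 1 < N.inDeg v by
      unfold IsRet at hret; omega) u
    exact not_reflTransGen_of_isRet hN.acyclic hnorm.2 huv hwv hret hwu
      (eq_of_isRoot_of_inDeg_eq_zero hr h0 ▸ hr.2 w)
  have hc_in : N.inDeg c = 1 := by
    have := hbin c
    have : N.inDeg c ≠ 0 := fun h0 => not_arc_of_inDeg_eq_zero h0 u huc
    have : N.inDeg c ≠ 2 := hc
    omega
  obtain ⟨q, hq⟩ := exists_arc_iff_of_inDeg_eq_one (show N.inDeg u = 1 by have := hbin u; omega)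
  refine ⟨q, c, hq, hcv, arc_iff_of_inDeg_eq_one hc_in huc, fun z huz => ?_⟩
  exact eq_or_eq_of_outDeg_eq_two (by have := hbin u; omega) huv huc hcv.symm huz

lemma isNetworkOn_singleton_and_normal (a : α) [Subsingleton N'.V]
    (hno : ∀ u v, ¬ N'.arc u v) : N'.IsNetworkOn {a} ∧ N'.Normal := by
  have hout (v : N'.V) : N'.outDeg v = 0 := by simp [outDeg, hno]
  have hin (v : N'.V) : N'.inDeg v = 0 := by simp [inDeg, hno]
  refine ⟨{
    nonemptyX := Finset.singleton_nonempty a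
    finiteV := Finite.of_subsingleton
    acyclic := fun v hv => ?_
    rooted := ⟨N'.leafMap a, hin _, fun v => Subsingleton.elim (N'.leafMap a) v ▸ .refl⟩
    leaf_isLeaf := fun _ _ => hout _
    leaf_inj := fun x hx y hy _ =>
      (Finset.mem_singleton.mp hx).trans (Finset.mem_singleton.mp hy).symm
    leaf_surj := fun _ _ => ⟨a, Finset.mem_singleton_self a, Subsingleton.elim _ _⟩
    degrees := Or.inl ⟨Finset.card_singleton a, inferInstance⟩ },
    fun v hv => absurd (hout v) hv, fun u v h => hno u v h.1⟩
  obtain ⟨w, hw, -⟩ := Relation.TransGen.head'_iff.mp hv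
  exact hno v w hw

/-- `N'` arises from `N` by deleting the vertices of `D` and suppressing those of `S`;
`j` identifies the vertices of `N'` with the remaining vertices of `N`. -/
structure IsReduction (N N' : PhyloNet α) (X : Finset α) (b : α) (S D : Set N.V)
    (j : N'.V → N.V) : Prop where
  injective : Function.Injective j
  range_eq : Set.range j = (S ∪ D)ᶜ
  arc_iff : ∀ u v, N'.arc u v ↔ N.arc (j u) (j v) ∨ ∃ s ∈ S, N.arc (j u) s ∧ N.arc s (j v)
  leafMap_eq : ∀ x ∈ X, x ≠ b → j (N'.leafMap x) = N.leafMap x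
  leafMap_mem : N.leafMap b ∈ D
  parent : ∀ s ∈ S, ∃ q ∉ S ∪ D, ∀ u, N.arc u s ↔ u = q
  child : ∀ s ∈ S, ∃ c ∉ S ∪ D, (∀ u, N.arc u c ↔ u = s) ∧ ∀ z, N.arc s z → z = c ∨ z ∈ D
  child_mem : ∀ d ∈ D, ∀ z, N.arc d z → z ∈ D
  parent_mem : ∀ d ∈ D, ∀ u, N.arc u d → u ∈ S ∪ D
  has_parent : ∀ d ∈ D, ∃ u, N.arc u d

namespace IsReduction

variable {S D : Set N.V} {j : N'.V → N.V}

lemma apply_notMem (R : IsReduction N N' X b S D j) (w : N'.V) : j w ∉ S ∪ D := by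
  simpa [R.range_eq] using Set.mem_range_self (f := j) w

lemma exists_apply_eq (R : IsReduction N N' X b S D j) {v : N.V} (hv : v ∉ S ∪ D) :
    ∃ w, j w = v := by
  rwa [← Set.mem_compl_iff, ← R.range_eq] at hv

lemma transGen_of_arc (R : IsReduction N N' X b S D j) {u v : N'.V} (h : N'.arc u v) :
    Relation.TransGen N.arc (j u) (j v) := by
  rcases (R.arc_iff u v).mp h with h | ⟨s, -, hus, hsv⟩
  · exact .single h
  · exact .tail (.single hus) hsv

lemma arc_iff_of_mem (R : IsReduction N N' X b S D j) {s : N.V} {w : N'.V} (hs : s ∈ S)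
    (h : N.arc s (j w)) (u : N.V) : N.arc u (j w) ↔ u = s := by
  obtain ⟨c, -, hc, hsc⟩ := R.child s hs
  rcases hsc _ h with hwc | hwD
  · rw [hwc]; exact hc u
  · exact absurd (Or.inr hwD) (R.apply_notMem w)

lemma inDeg_eq (R : IsReduction N N' X b S D j) (w : N'.V) : N'.inDeg w = N.inDeg (j w) := by
  classical
  choose! q hqSD hq using R.parent
  refine Set.ncard_eq_ncard_of_image_eq R.injective
    (f := fun u => if u ∈ S then q u else u) (fun u hu u' hu' huu' => ?_) ?_
  · by_cases hS : u ∈ S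
    · exact ((R.arc_iff_of_mem hS hu u').mp hu').symm
    by_cases hS' : u' ∈ S
    · exact (R.arc_iff_of_mem hS' hu' u).mp hu
    simpa only [if_neg hS, if_neg hS'] using huu'
  ext z
  simp only [Set.mem_image, Set.mem_ofPred_eq]
  constructor
  · rintro ⟨u, hu, rfl⟩
    rcases (R.arc_iff u w).mp hu with h | ⟨s, hs, hus, hsw⟩
    · exact ⟨j u, h, if_neg fun hS => R.apply_notMem u (Or.inl hS)⟩
    · exact ⟨s, hsw, by rw [if_pos hs, ← (hq s hs _).mp hus]⟩
  · rintro ⟨u, hu, rfl⟩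
    by_cases hS : u ∈ S
    · obtain ⟨u', hu'⟩ := R.exists_apply_eq (hqSD u hS)
      refine ⟨u', (R.arc_iff u' w).mpr (Or.inr ⟨u, hS, (hq u hS _).mpr hu', hu⟩), ?_⟩
      rw [if_pos hS, hu']
    · have hD : u ∉ D := fun hD => R.apply_notMem w (Or.inr (R.child_mem u hD _ hu))
      obtain ⟨u', rfl⟩ := R.exists_apply_eq (not_or.mpr ⟨hS, hD⟩)
      exact ⟨u', (R.arc_iff u' w).mpr (Or.inl hu), (if_neg hS).symm⟩

lemma outDeg_eq (R : IsReduction N N' X b S D j) (w : N'.V) : N'.outDeg w = N.outDeg (j w) := by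
  classical
  choose! c hcSD hc hsc using R.child
  have hwS : j w ∉ S := fun hS => R.apply_notMem w (Or.inl hS)
  refine Set.ncard_eq_ncard_of_image_eq R.injective
    (f := fun z => if z ∈ S then c z else z) (fun z hz z' hz' hzz' => ?_) ?_
  · simp only at hzz'
    by_cases hS : z ∈ S <;> by_cases hS' : z' ∈ S <;>
      simp only [hS, hS', if_true, if_false] at hzz'
    · exact ((hc z hS z').mp (hzz' ▸ (hc z' hS' z').mpr rfl)).symm
    · exact absurd ((hc z hS _).mp (hzz' ▸ hz')) fun h => hwS (by rwa [h])
    · exact absurd ((hc z' hS' _).mp (hzz' ▸ hz)) fun h => hwS (by rwa [h])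
    · exact hzz'
  ext z
  simp only [Set.mem_image, Set.mem_ofPred_eq]
  constructor
  · rintro ⟨w', hw', rfl⟩
    rcases (R.arc_iff w w').mp hw' with h | ⟨s, hs, hws, hsw'⟩
    · exact ⟨j w', h, if_neg fun hS => R.apply_notMem w' (Or.inl hS)⟩
    · refine ⟨s, hws, ?_⟩
      rcases hsc s hs _ hsw' with h | hD
      · rw [if_pos hs, h]
      · exact absurd (Or.inr hD) (R.apply_notMem w')
  · rintro ⟨z, hz, rfl⟩
    by_cases hS : z ∈ S
    · obtain ⟨w', hw'⟩ := R.exists_apply_eq (hcSD z hS)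
      refine ⟨w', (R.arc_iff w w').mpr (Or.inr ⟨z, hS, hz, hw' ▸ (hc z hS z).mpr rfl⟩), ?_⟩
      rw [if_pos hS, hw']
    · have hD : z ∉ D := fun hD => R.apply_notMem w (R.parent_mem z hD _ hz)
      obtain ⟨w', rfl⟩ := R.exists_apply_eq (not_or.mpr ⟨hS, hD⟩)
      exact ⟨w', (R.arc_iff w w').mpr (Or.inl hz), (if_neg hS).symm⟩

lemma exists_isRoot [Finite N.V] (R : IsReduction N N' X b S D j) {r : N.V} (hr : N.IsRoot r) :
    ∃ w, N'.IsRoot w := by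
  have hrSD : r ∉ S ∪ D := by
    rintro (hS | hD)
    · obtain ⟨q, -, hq⟩ := R.parent r hS
      exact not_arc_of_inDeg_eq_zero hr.1 q ((hq q).mpr rfl)
    · obtain ⟨u, hu⟩ := R.has_parent r hD
      exact not_arc_of_inDeg_eq_zero hr.1 u hu
  obtain ⟨wr, rfl⟩ := R.exists_apply_eq hrSD
  have reach (v : N.V) (hv : Relation.ReflTransGen N.arc (j wr) v) : v ∈ D ∨
      ∃ w, Relation.ReflTransGen N'.arc wr w ∧ (j w = v ∨ v ∈ S ∧ N.arc (j w) v) := by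
    induction hv with
    | refl => exact Or.inr ⟨wr, .refl, Or.inl rfl⟩
    | @tail v z _ hvz ih =>
      rcases ih with hD | ⟨w, hw, rfl | ⟨hS, hwv⟩⟩
      · exact Or.inl (R.child_mem v hD z hvz)
      · by_cases hz : z ∈ S ∪ D
        · rcases hz with hS | hD
          · exact Or.inr ⟨w, hw, Or.inr ⟨hS, hvz⟩⟩
          · exact Or.inl hD
        · obtain ⟨w', rfl⟩ := R.exists_apply_eq hz
          exact Or.inr ⟨w', hw.tail ((R.arc_iff w w').mpr (Or.inl hvz)), Or.inl rfl⟩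
      · obtain ⟨c, hcSD, -, hsc⟩ := R.child v hS
        rcases hsc z hvz with rfl | hD
        · obtain ⟨w', rfl⟩ := R.exists_apply_eq hcSD
          exact Or.inr ⟨w', hw.tail ((R.arc_iff w w').mpr (Or.inr ⟨v, hS, hwv, hvz⟩)),
            Or.inl rfl⟩
        · exact Or.inl hD
  refine ⟨wr, (R.inDeg_eq wr).trans hr.1, fun w => ?_⟩
  rcases reach (j w) (hr.2 _) with hD | ⟨w', hw', h | ⟨hS, -⟩⟩
  · exact absurd (Or.inr hD) (R.apply_notMem w)
  · rwa [R.injective h] at hw'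
  · exact absurd (Or.inl hS) (R.apply_notMem w)

lemma treeChild (R : IsReduction N N' X b S D j) (htc : N.TreeChild) : N'.TreeChild := by
  intro w hw
  obtain ⟨c, hwc, hc⟩ := htc (j w) (by rwa [IsLeaf, ← R.outDeg_eq])
  by_cases hS : c ∈ S
  · obtain ⟨c', hc'SD, hc', -⟩ := R.child c hS
    obtain ⟨w', rfl⟩ := R.exists_apply_eq hc'SD
    refine ⟨w', (R.arc_iff w w').mpr (Or.inr ⟨c, hS, hwc, (hc' c).mpr rfl⟩), ?_⟩
    rw [IsRet, R.inDeg_eq, inDeg_eq_one_of_arc_iff hc']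
    decide
  · have hD : c ∉ D := fun hD => R.apply_notMem w (R.parent_mem c hD _ hwc)
    obtain ⟨w', rfl⟩ := R.exists_apply_eq (not_or.mpr ⟨hS, hD⟩)
    exact ⟨w', (R.arc_iff w w').mpr (Or.inl hwc), by rwa [IsRet, R.inDeg_eq]⟩

lemma not_shortcut (R : IsReduction N N' X b S D j) (hsc : ∀ u v, ¬ N.Shortcut u v)
    (u v : N'.V) : ¬ N'.Shortcut u v := by
  rintro ⟨huv, hret, hpath⟩
  rw [IsRet, R.inDeg_eq] at hret
  refine hsc (j u) (j v) ⟨?_, hret, ?_⟩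
  · rcases (R.arc_iff u v).mp huv with h | ⟨s, hs, -, hsv⟩
    · exact h
    · rw [inDeg_eq_one_of_arc_iff (R.arc_iff_of_mem hs hsv)] at hret
      exact absurd hret (by decide)
  · refine Relation.TransGen.lift' j (fun x y hxy => ?_) _ _ hpath
    obtain ⟨hxy, hne⟩ := hxy
    rcases (R.arc_iff x y).mp hxy with h | ⟨s, hs, hxs, hsy⟩
    · exact .single ⟨h, fun ⟨hx, hy⟩ => hne ⟨R.injective hx, R.injective hy⟩⟩
    · exact .tail (.single ⟨hxs, fun ⟨_, h⟩ => R.apply_notMem v (Or.inl (h ▸ hs))⟩)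
        ⟨hsy, fun ⟨h, _⟩ => R.apply_notMem u (Or.inl (h ▸ hs))⟩

lemma isNetworkOn [DecidableEq α] (R : IsReduction N N' X b S D j) (hN : N.IsNetworkOn X)
    (ha : a ∈ X) (hb : b ∈ X) (hab : a ≠ b) : N'.IsNetworkOn (X.erase b) := by
  have := hN.finiteV
  obtain ⟨r, hr⟩ := hN.rooted
  refine ⟨⟨a, Finset.mem_erase.mpr ⟨hab, ha⟩⟩, Finite.of_injective j R.injective,
    fun v hv => hN.acyclic (j v) (.lift' j (fun _ _ => R.transGen_of_arc) _ _ hv),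
    R.exists_isRoot hr, fun x hx => ?_, fun x hx y hy hxy => ?_, fun w hw => ?_,
    Or.inr fun w => ?_⟩
  · obtain ⟨hxb, hxX⟩ := Finset.mem_erase.mp hx
    rw [IsLeaf, R.outDeg_eq, R.leafMap_eq x hxX hxb]
    exact hN.leaf_isLeaf x hxX
  · obtain ⟨hxb, hxX⟩ := Finset.mem_erase.mp hx
    obtain ⟨hyb, hyX⟩ := Finset.mem_erase.mp hy
    refine hN.leaf_inj x hxX y hyX ?_
    rw [← R.leafMap_eq x hxX hxb, ← R.leafMap_eq y hyX hyb, hxy]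
  · obtain ⟨x, hxX, hx⟩ := hN.leaf_surj (j w) (by rwa [IsLeaf, ← R.outDeg_eq])
    have hxb : x ≠ b := by
      rintro rfl
      exact R.apply_notMem w (Or.inr (hx ▸ R.leafMap_mem))
    exact ⟨x, Finset.mem_erase.mpr ⟨hxb, hxX⟩, R.injective (by rw [R.leafMap_eq x hxX hxb, hx])⟩
  · rw [R.inDeg_eq, R.outDeg_eq]
    exact hN.isBinary ha hb hab (j w)

lemma normal (R : IsReduction N N' X b S D j) (hnorm : N.Normal) : N'.Normal :=
  ⟨R.treeChild hnorm.1, R.not_shortcut hnorm.2⟩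

end IsReduction

lemma eq_or_eq_or_eq_of_isRoot [Finite N.V] {p x y : N.V} (hp : N.IsRoot p)
    (hchild : ∀ z, N.arc p z → z = x ∨ z = y) (hx : N.IsLeaf x) (hy : N.IsLeaf y) (v : N.V) :
    v = p ∨ v = x ∨ v = y := by
  rcases (hp.2 v).cases_head with rfl | ⟨z, hpz, hzv⟩
  · exact Or.inl rfl
  · rcases hchild z hpz with rfl | rfl
    · exact Or.inr (Or.inl (eq_of_reflTransGen_of_isLeaf hx hzv))
    · exact Or.inr (Or.inr (eq_of_reflTransGen_of_isLeaf hy hzv))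

lemma isNetworkOn_and_normal_of_root_cherry [DecidableEq α] (hN : N.IsNetworkOn X) (ha : a ∈ X)
    (hb : b ∈ X) (hab : a ≠ b) {p : N.V} (hp : N.IsRoot p) (hpa : N.arc p (N.leafMap a))
    (hp_child : ∀ z, N.arc p z → z = N.leafMap a ∨ z = N.leafMap b) {j : N'.V → N.V}
    (hj : Function.Injective j) (havoid : ∀ w, j w ≠ p ∧ j w ≠ N.leafMap b)
    (harc : ∀ u v, N'.arc u v → ∃ z, N.arc (j u) z) :
    N'.IsNetworkOn (X.erase b) ∧ N'.Normal := by
  have := hN.finiteV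
  have hla := hN.leaf_isLeaf a ha
  have hV := eq_or_eq_or_eq_of_isRoot hp hp_child hla (hN.leaf_isLeaf b hb)
  have hj_eq (w : N'.V) : j w = N.leafMap a := by
    have := havoid w
    rcases hV (j w) with h | h | h <;> tauto
  have : Subsingleton N'.V := ⟨fun w w' => hj ((hj_eq w).trans (hj_eq w').symm)⟩
  have hX : X.erase b = {a} := by
    ext x
    simp only [Finset.mem_erase, Finset.mem_singleton]
    refine ⟨fun ⟨hxb, hx⟩ => ?_, fun hxa => hxa ▸ ⟨hab, ha⟩⟩
    rcases hV (N.leafMap x) with h | h | h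
    · exact absurd hpa (h ▸ not_arc_of_isLeaf (hN.leaf_isLeaf x hx) _)
    · exact hN.leaf_inj x hx a ha h
    · exact absurd (hN.leaf_inj x hx b hb h) hxb
  rw [hX]
  refine isNetworkOn_singleton_and_normal a fun u v huv => ?_
  obtain ⟨z, hz⟩ := harc u v huv
  exact not_arc_of_isLeaf hla z (hj_eq u ▸ hz)

lemma DelCherry.isNetworkOn_and_normal [DecidableEq α] (hN : N.IsNetworkOn X) (hnorm : N.Normal)
    (ha : a ∈ X) (hb : b ∈ X) (hab : a ≠ b) (hdel : N.DelCherry N' X a b) :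
    N'.IsNetworkOn (X.erase b) ∧ N'.Normal := by
  have := hN.finiteV
  have hbin := hN.isBinary ha hb hab
  obtain ⟨p, j, hpa, hpb, hj, hcompat, hsurj, havoid, harc⟩ := hdel
  have hla : N.outDeg (N.leafMap a) = 0 := hN.leaf_isLeaf a ha
  have hlb : N.outDeg (N.leafMap b) = 0 := hN.leaf_isLeaf b hb
  have hab' : N.leafMap a ≠ N.leafMap b := fun h => hab (hN.leaf_inj a ha b hb h)
  have hp_out : N.outDeg p = 2 := by
    have := two_le_outDeg hpa hpb hab'
    have := hbin p
    omega
  have hp_child (z : N.V) (hz : N.arc p z) : z = N.leafMap a ∨ z = N.leafMap b :=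
    eq_or_eq_of_outDeg_eq_two hp_out hpa hpb hab' hz
  obtain ⟨r, hr⟩ := hN.rooted
  by_cases hp_in : N.inDeg p = 0
  · refine isNetworkOn_and_normal_of_root_cherry hN ha hb hab
      (eq_of_isRoot_of_inDeg_eq_zero hr hp_in ▸ hr) hpa hp_child hj havoid fun u v huv => ?_
    rcases (harc u v).mp huv with h | ⟨h, -⟩ <;> exact ⟨_, h⟩
  obtain ⟨q, hq⟩ := exists_arc_iff_of_inDeg_eq_one (show N.inDeg p = 1 by have := hbin p; omega)
  have hqp := (hq q).mpr rfl
  have R : IsReduction N N' X b {p} {N.leafMap b} j := {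
    injective := hj
    range_eq := by
      ext v
      simp only [Set.mem_range, Set.singleton_union, Set.mem_compl_iff, Set.mem_insert_iff,
        Set.mem_singleton_iff, not_or]
      exact ⟨fun ⟨w, hw⟩ => hw ▸ havoid w, fun h => hsurj v h.1 h.2⟩
    arc_iff := by simpa using harc
    leafMap_eq := hcompat
    leafMap_mem := rfl
    parent := by
      rintro s rfl
      exact ⟨q, by simp [hN.ne_of_arc hqp, ne_of_arc_of_isLeaf hlb hqp], hq⟩
    child := by
      rintro s rfl
      refine ⟨N.leafMap a, by simp [(ne_of_arc_of_isLeaf hla hpa).symm, hab'],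
        arc_iff_of_inDeg_eq_one (by have := hbin (N.leafMap a); omega) hpa, hp_child⟩
    child_mem := by
      rintro d rfl z hz
      exact absurd hz (not_arc_of_isLeaf hlb z)
    parent_mem := by
      rintro d rfl u hu
      exact Or.inl ((arc_iff_of_inDeg_eq_one (by have := hbin (N.leafMap b); omega) hpb u).mp hu)
    has_parent := by
      rintro d rfl
      exact ⟨p, hpb⟩ }
  exact ⟨R.isNetworkOn hN ha hb hab, R.normal hnorm⟩

lemma exists_parent_and_child_of_retCherry (hN : N.IsNetworkOn X) (hbin : N.IsBinary)
    (hnorm : N.Normal) {pa pb gb la lb : N.V} (hla : N.IsLeaf la) (hlb : N.IsLeaf lb)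
    (hlalb : la ≠ lb) (hpala : N.arc pa la) (hpblb : N.arc pb lb) (hret : N.IsRet pb)
    (hpapb : N.arc pa pb) (hgbpb : N.arc gb pb) (hgbpa : gb ≠ pa) :
    (∀ s ∈ ({pa, gb} : Set N.V), ∃ q ∉ ({pa, gb} ∪ {pb, lb} : Set N.V),
      ∀ u, N.arc u s ↔ u = q) ∧
    (∀ s ∈ ({pa, gb} : Set N.V), ∃ c ∉ ({pa, gb} ∪ {pb, lb} : Set N.V),
      (∀ u, N.arc u c ↔ u = s) ∧ ∀ z, N.arc s z → z = c ∨ z ∈ ({pb, lb} : Set N.V)) := by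
  have := hN.finiteV
  obtain ⟨qa, ca, hqa, -, hca, hpa_child⟩ :=
    exists_parent_and_child_of_isRet hN hbin hnorm hpapb hret
  obtain ⟨qg, cb, hqg, hcbpb, hcb, hgb_child⟩ :=
    exists_parent_and_child_of_isRet hN hbin hnorm hgbpb hret
  obtain rfl : la = ca := (hpa_child _ hpala).resolve_left (ne_of_arc_of_isLeaf hla hpblb).symm
  have hgb_pa := not_reflTransGen_of_isRet hN.acyclic hnorm.2 hgbpb hpapb hret hgbpa.symm
  have hpa_gb := not_reflTransGen_of_isRet hN.acyclic hnorm.2 hpapb hgbpb hret hgbpa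
  have hqapa := (hqa qa).mpr rfl
  have hqggb := (hqg qg).mpr rfl
  have hgbcb := (hcb gb).mpr rfl
  simp only [Set.mem_insert_iff, Set.mem_singleton_iff, forall_eq_or_imp, forall_eq,
    Set.mem_union, not_or]
  refine ⟨⟨⟨qa, ⟨⟨hN.ne_of_arc hqapa, fun h => hgb_pa (h ▸ .single hqapa)⟩,
      fun h => hN.acyclic _ (.tail (.single (h ▸ hqapa)) hpapb), ne_of_arc_of_isLeaf hlb hqapa⟩,
      hqa⟩,
    ⟨qg, ⟨⟨fun h => hpa_gb (h ▸ .single hqggb), hN.ne_of_arc hqggb⟩,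
      fun h => hN.acyclic _ (.tail (.single (h ▸ hqggb)) hgbpb), ne_of_arc_of_isLeaf hlb hqggb⟩,
      hqg⟩⟩, ⟨⟨la, ⟨⟨(ne_of_arc_of_isLeaf hla hpapb).symm, (ne_of_arc_of_isLeaf hla hgbpb).symm⟩,
      (ne_of_arc_of_isLeaf hla hpblb).symm, hlalb⟩, hca, fun z hz => ?_⟩,
    ⟨cb, ⟨⟨fun h => hgb_pa (h ▸ .single hgbcb), (hN.ne_of_arc hgbcb).symm⟩, hcbpb,
      fun h => hN.ne_of_arc hgbpb ((hcb pb).mp (h ▸ hpblb)).symm⟩, hcb, fun z hz => ?_⟩⟩⟩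
  · have := hpa_child z hz
    tauto
  · have := hgb_child z hz
    tauto

lemma DelRetCherry.exists_isReduction (hN : N.IsNetworkOn X) (hnorm : N.Normal) (ha : a ∈ X)
    (hb : b ∈ X) (hab : a ≠ b) (hdel : N.DelRetCherry N' X a b) :
    ∃ (S D : Set N.V) (j : N'.V → N.V), IsReduction N N' X b S D j := by
  have := hN.finiteV
  have hbin := hN.isBinary ha hb hab
  obtain ⟨pa, pb, gb, j, hpala, hpblb, hret, hpapb, hgbpb, hgbpa, hj, hcompat, hsurj, havoid,
    harc⟩ := hdel
  have hlb : N.outDeg (N.leafMap b) = 0 := hN.leaf_isLeaf b hb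
  obtain ⟨hparent, hchild⟩ := exists_parent_and_child_of_retCherry hN hbin hnorm
    (hN.leaf_isLeaf a ha) hlb (fun h => hab (hN.leaf_inj a ha b hb h)) hpala hpblb hret hpapb
    hgbpb hgbpa
  have hpb_child (z : N.V) (hz : N.arc pb z) : z = N.leafMap b :=
    eq_of_outDeg_eq_one (by have := hbin pb; have : N.inDeg pb = 2 := hret; omega) hz hpblb
  have hlb_par := arc_iff_of_inDeg_eq_one (by have := hbin (N.leafMap b); omega) hpblb
  refine ⟨{pa, gb}, {pb, N.leafMap b}, j, hj, ?_,
    fun u v => by simp [harc, or_and_right, exists_or], hcompat, by simp, hparent, hchild, ?_, ?_,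
    ?_⟩
  · ext v
    have hav := fun w => havoid w
    simp only [Set.mem_range, Set.mem_compl_iff, Set.mem_union, Set.mem_insert_iff,
      Set.mem_singleton_iff, not_or] at hav hsurj ⊢
    exact ⟨fun ⟨w, hw⟩ => hw ▸ by have := hav w; tauto, fun h => hsurj v (by tauto)⟩
  all_goals simp only [Set.mem_insert_iff, Set.mem_singleton_iff, forall_eq_or_imp, forall_eq,
    Set.mem_union]
  · exact ⟨fun z hz => Or.inr (hpb_child z hz), fun z hz => absurd hz (not_arc_of_isLeaf hlb z)⟩
  · exact ⟨fun u hu => Or.inl (eq_or_eq_of_inDeg_eq_two hret hpapb hgbpb hgbpa.symm hu),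
      fun u hu => Or.inr (Or.inl ((hlb_par u).mp hu))⟩
  · exact ⟨⟨pa, hpapb⟩, ⟨pb, hpblb⟩⟩

end PhyloNet

open PhyloNet in
/-- Deleting the leaf `b` of a cherry, or the reticulation leaf `b`
of a reticulated cherry, of a normal network yields a normal network on `X − {b}`. -/
theorem deleting_leaf_normal {α : Type} [DecidableEq α] (X : Finset α) (N N' : PhyloNet α)
    (hN : N.IsNetworkOn X) (hnorm : N.Normal)
    (a b : α) (ha : a ∈ X) (hb : b ∈ X) (hab : a ≠ b)
    (hdel : N.DelCherry N' X a b ∨ N.DelRetCherry N' X a b) :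
    N'.IsNetworkOn (X.erase b) ∧ N'.Normal := by
  rcases hdel with hdel | hdel
  · exact hdel.isNetworkOn_and_normal hN hnorm ha hb hab
  · obtain ⟨S, D, j, R⟩ := hdel.exists_isReduction hN hnorm ha hb hab
    exact ⟨R.isNetworkOn hN ha hb hab, R.normal hnorm⟩
end

section
/- Let N be a normal network on X. If N has at least one reticulation and |X| ≥ 4, or N has at least two reticulations, or |X| ≥ 5, then N displays at least one quad. -/
/-!
Call a vertex *branching* if it has out-degree two (the root or a tree vertex), and let
`TreeStep u v` say that `u` and `v` are branching and a tree path (no reticulation after its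
first vertex) leads from a child of `u` to `v`.

If `TreeStep r q` and `TreeStep q p`, follow tree paths from the other child of `r`, the other
child of `q` and both children of `p` down to four leaves. In a tree-child network a vertex of a
tree path other than its head has its unique parent on the path, so two tree paths that meet
contain the head of one another; together with the absence of shortcuts (which makes the six
children involved pairwise distinct) this shows that the six paths meet only at their ends, i.e.
they form a subdivision of a caterpillar on four leaves.

If there is no such chain, every tree vertex is a child of the root, and so is every parent of a
reticulation. Hence there are at most two tree vertices, and every reticulation is a common child
of the two children of the root; as these have a non-reticulate child each, there is at most one
reticulation. The degree count `#leaves + #reticulations = #tree vertices + 2` then contradicts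
each of the three hypotheses.
-/

open Relation

theorem List.IsChain.exists_rel_of_mem_tail {β : Type*} {R : β → β → Prop} :
    ∀ {l : List β}, l.IsChain R → ∀ {w : β}, w ∈ l.tail → ∃ x ∈ l, R x w
  | [], _, _, hw => absurd hw List.not_mem_nil
  | [_], _, _, hw => absurd hw List.not_mem_nil
  | a :: b :: t, h, w, hw => by
    rcases List.mem_cons.1 hw with rfl | hw
    · exact ⟨a, List.mem_cons_self, h.rel⟩
    · obtain ⟨x, hx, hxw⟩ := h.tail.exists_rel_of_mem_tail hw
      exact ⟨x, List.mem_cons_of_mem _ hx, hxw⟩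

namespace PhyloNet

variable {α : Type} {N : PhyloNet α}

theorem exists_arc_of_inDeg_ne_zero {v : N.V} (h : N.inDeg v ≠ 0) : ∃ u, N.arc u v :=
  Set.nonempty_of_ncard_ne_zero h

theorem exists_arc_ne_of_outDeg_eq_two {u : N.V} (h : N.outDeg u = 2) (v : N.V) :
    ∃ w, N.arc u w ∧ w ≠ v :=
  Set.exists_ne_of_one_lt_ncard (s := {w | N.arc u w}) (by unfold outDeg at h; omega) v

theorem sum_inDeg_eq_sum_outDeg [Fintype N.V] : ∑ v, N.inDeg v = ∑ v, N.outDeg v := by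
  classical
  have hin (v : N.V) : N.inDeg v = ∑ u, if N.arc u v then 1 else 0 := by
    rw [inDeg, Set.ncard_eq_toFinset_card', Set.toFinset_ofPred, Finset.card_filter]
  have hout (u : N.V) : N.outDeg u = ∑ v, if N.arc u v then 1 else 0 := by
    rw [outDeg, Set.ncard_eq_toFinset_card', Set.toFinset_ofPred, Finset.card_filter]
  simp only [hin, hout]
  exact Finset.sum_comm

theorem IsNetworkOn.ncard_isLeaf {X : Finset α} (hN : N.IsNetworkOn X) :
    {v | N.IsLeaf v}.ncard = X.card := by
  have hleaf : {v | N.IsLeaf v} = N.leafMap '' X := by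
    ext v
    refine ⟨fun hv => ?_, ?_⟩
    · obtain ⟨x, hx, rfl⟩ := hN.leaf_surj v hv
      exact ⟨x, hx, rfl⟩
    · rintro ⟨x, hx, rfl⟩
      exact hN.leaf_isLeaf x hx
  rw [hleaf, Set.InjOn.ncard_image fun x hx y hy => hN.leaf_inj x hx y hy, Set.ncard_coe_finset]

def IsPath (N : PhyloNet α) (l : List N.V) (u v : N.V) : Prop :=
  l.IsChain N.arc ∧ l.head? = some u ∧ l.getLast? = some v

def IsTreePath (N : PhyloNet α) (l : List N.V) (c v : N.V) : Prop :=
  N.IsPath l c v ∧ ∀ w ∈ l, w ≠ c → ¬ N.IsRet w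

def IsPendant (N : PhyloNet α) (e : N.V × N.V) (l : List N.V) : Prop :=
  ∃ c, N.arc e.1 c ∧ N.IsTreePath l c e.2

def TreeStep (N : PhyloNet α) (u v : N.V) : Prop :=
  N.outDeg u = 2 ∧ N.outDeg v = 2 ∧ ∃ l, N.IsPendant (u, v) l

namespace IsPath

variable {l : List N.V} {s u v w : N.V}

theorem last_mem (h : N.IsPath l u v) : v ∈ l := List.mem_of_mem_getLast? h.2.2

theorem reflTransGen_head (h : N.IsPath l u v) (hw : w ∈ l) : ReflTransGen N.arc u w :=
  h.1.induction (ReflTransGen N.arc u) l (fun _ _ hxy hx => hx.tail hxy)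
    (fun hl => (List.head_eq_iff_head?_eq_some hl).2 h.2.1 ▸ .refl) w hw

theorem reflTransGen_last (h : N.IsPath l u v) (hw : w ∈ l) : ReflTransGen N.arc w v :=
  h.1.backwards_induction (ReflTransGen N.arc · v) l (fun _ _ hxy hy => hy.head hxy)
    (fun hl => (List.getLast_eq_iff_getLast?_eq_some hl).2 h.2.2 ▸ .refl) w hw

theorem exists_arc_of_mem (h : N.IsPath l u v) (hw : w ∈ l) (hwu : w ≠ u) :
    ∃ x ∈ l, N.arc x w := by
  obtain ⟨t, rfl⟩ := List.head?_eq_some_iff.1 h.2.1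
  exact h.1.exists_rel_of_mem_tail ((List.mem_cons.1 hw).resolve_left hwu)

theorem cons (h : N.IsPath l u v) (hs : N.arc s u) : N.IsPath (s :: l) s v := by
  obtain ⟨t, rfl⟩ := List.head?_eq_some_iff.1 h.2.1
  exact ⟨h.1.cons_cons hs, rfl, by simpa using h.2.2⟩

end IsPath

theorem IsTreePath.singleton (v : N.V) : N.IsTreePath [v] v v :=
  ⟨⟨.singleton v, rfl, rfl⟩, by simp⟩

theorem IsTreePath.cons {s c t : N.V} {l : List N.V} (hl : N.IsTreePath l c t)
    (hs : N.arc s c) (hc : ¬ N.IsRet c) : N.IsTreePath (s :: l) s t := by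
  refine ⟨hl.1.cons hs, fun w hw hws => ?_⟩
  rcases List.mem_cons.1 hw with rfl | hw
  · exact absurd rfl hws
  by_cases hwc : w = c
  · exact hwc ▸ hc
  · exact hl.2 w hw hwc

theorem pathSys_of_pairwise {paths : List ((N.V × N.V) × List N.V)}
    (hpath : ∀ e ∈ paths, N.IsPath e.2 e.1.1 e.1.2)
    (hmeet : paths.Pairwise fun e e' => ∀ w ∈ e.2, w ∈ e'.2 →
      (w = e.1.1 ∨ w = e.1.2) ∧ (w = e'.1.1 ∨ w = e'.1.2)) :
    N.PathSys (paths.map Prod.fst) := by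
  have hP : ∀ e ∈ paths.map Prod.fst, ∃ L, (e, L) ∈ paths := by
    simp only [List.mem_map]
    rintro e ⟨⟨e, L⟩, hL, rfl⟩
    exact ⟨L, hL⟩
  choose! P hP using hP
  have : Std.Symm fun e e' : (N.V × N.V) × List N.V => ∀ w ∈ e.2, w ∈ e'.2 →
      (w = e.1.1 ∨ w = e.1.2) ∧ (w = e'.1.1 ∨ w = e'.1.2) :=
    ⟨fun _ _ h w hw hw' => (h w hw' hw).symm⟩
  exact ⟨P, fun e he => hpath _ (hP e he), fun e he e' he' hne =>
    hmeet.forall (hP e he) (hP e' he') fun h => hne (congrArg Prod.fst h)⟩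

theorem meet_cons_of_disjoint {β : Type*} {s t s' t' : β} {l l' : List β} (hd : ∀ w ∈ l, w ∉ l')
    (hst : s ∉ l' ∨ s = t') (hst' : s' ∉ l ∨ s' = t) :
    ∀ w ∈ s :: l, w ∈ s' :: l' → (w = s ∨ w = t) ∧ (w = s' ∨ w = t') := by
  intro w hw hw'
  rcases List.mem_cons.1 hw with rfl | hw <;> rcases List.mem_cons.1 hw' with rfl | hw'
  · exact ⟨.inl rfl, .inl rfl⟩
  · exact ⟨.inl rfl, .inr (hst.resolve_left (not_not.2 hw'))⟩
  · exact ⟨.inr (hst'.resolve_left (not_not.2 hw)), .inl rfl⟩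
  · exact absurd hw' (hd w hw)

/-- The non-degenerate case of `IsNetworkOn`, with its root `ρ`. -/
structure IsBinary_s12 (N : PhyloNet α) (ρ : N.V) : Prop where
  finite : Finite N.V
  acyclic : ∀ v : N.V, ¬ TransGen N.arc v v
  isRoot : N.IsRoot ρ
  degrees : ∀ v : N.V,
    (N.inDeg v = 0 ∧ N.outDeg v = 2) ∨ (N.inDeg v = 1 ∧ N.outDeg v = 0) ∨
    (N.inDeg v = 1 ∧ N.outDeg v = 2) ∨ (N.inDeg v = 2 ∧ N.outDeg v = 1)

namespace IsBinary_s12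

variable {ρ s s' c c' t t' u v w : N.V} {l l' : List N.V}

theorem ne_of_transGen (hb : N.IsBinary_s12 ρ) (h : TransGen N.arc u v) : u ≠ v := by
  rintro rfl
  exact hb.acyclic u h

theorem inDeg_le_two (hb : N.IsBinary_s12 ρ) (v : N.V) : N.inDeg v ≤ 2 := by
  rcases hb.degrees v with h | h | h | h <;> omega

theorem outDeg_le_two (hb : N.IsBinary_s12 ρ) (v : N.V) : N.outDeg v ≤ 2 := by
  rcases hb.degrees v with h | h | h | h <;> omega

theorem outDeg_root (hb : N.IsBinary_s12 ρ) : N.outDeg ρ = 2 := by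
  have := hb.isRoot.1
  rcases hb.degrees ρ with h | h | h | h <;> omega

theorem eq_root_of_inDeg_eq_zero (hb : N.IsBinary_s12 ρ) (h : N.inDeg v = 0) : v = ρ := by
  have := hb.finite
  rcases (hb.isRoot.2 v).cases_tail with rfl | ⟨u, -, hu⟩
  · rfl
  · exact absurd h ((Set.ncard_pos (Set.toFinite _)).2 ⟨u, hu⟩).ne'

theorem not_isLeaf_of_arc (hb : N.IsBinary_s12 ρ) (h : N.arc u v) : ¬ N.IsLeaf u := by
  have := hb.finite
  exact ((Set.ncard_pos (Set.toFinite _)).2 ⟨v, h⟩).ne'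

theorem isRet_of_arc_of_arc (hb : N.IsBinary_s12 ρ) (hu : N.arc u w) (hv : N.arc v w) (huv : u ≠ v) :
    N.IsRet w := by
  have := hb.finite
  have : 2 ≤ N.inDeg w := by
    rw [← Set.ncard_pair huv]
    exact Set.ncard_le_ncard (Set.pair_subset hu hv)
  exact le_antisymm (hb.inDeg_le_two w) this

theorem outDeg_eq_one_of_isRet (hb : N.IsBinary_s12 ρ) (h : N.IsRet v) : N.outDeg v = 1 := by
  unfold IsRet at h
  rcases hb.degrees v with h' | h' | h' | h' <;> omega

theorem eq_of_arc_of_arc_of_isRet (hb : N.IsBinary_s12 ρ) (h : N.IsRet u) (hv : N.arc u v)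
    (hw : N.arc u w) : v = w := by
  obtain ⟨x, hx⟩ := Set.ncard_eq_one.1 (hb.outDeg_eq_one_of_isRet h)
  have hv' : v ∈ {y | N.arc u y} := hv
  have hw' : w ∈ {y | N.arc u y} := hw
  rw [hx] at hv' hw'
  exact hv'.trans hw'.symm

theorem ncard_isLeaf_add_ncard_isRet (hb : N.IsBinary_s12 ρ) :
    {v | N.IsLeaf v}.ncard + {v | N.IsRet v}.ncard = {v | N.IsTreeVert v}.ncard + 2 := by
  classical
  have := hb.finite
  have : Fintype N.V := Fintype.ofFinite _
  have hv (v : N.V) : N.outDeg v + (if N.IsLeaf v then 1 else 0) + (if N.IsRet v then 1 else 0) =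
      N.inDeg v + (if v = ρ then 2 else 0) + (if N.IsTreeVert v then 1 else 0) := by
    have hρ : v = ρ ↔ N.inDeg v = 0 :=
      ⟨fun h => h ▸ hb.isRoot.1, hb.eq_root_of_inDeg_eq_zero⟩
    simp only [hρ, IsLeaf, IsRet, IsTreeVert]
    rcases hb.degrees v with ⟨h₁, h₂⟩ | ⟨h₁, h₂⟩ | ⟨h₁, h₂⟩ | ⟨h₁, h₂⟩ <;> simp [h₁, h₂]
  have hsum := Finset.sum_congr rfl fun v (_ : v ∈ Finset.univ) => hv v
  simp only [Finset.sum_add_distrib, Finset.sum_ite_eq', Finset.mem_univ, if_true,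
    sum_inDeg_eq_sum_outDeg] at hsum
  simp only [Set.ncard_eq_toFinset_card', Set.toFinset_ofPred, Finset.card_filter]
  omega

theorem notMem_of_transGen_head (hb : N.IsBinary_s12 ρ) (hl : N.IsPath l c t)
    (h : TransGen N.arc s c) : s ∉ l :=
  fun hs => hb.acyclic s (h.trans_left (hl.reflTransGen_head hs))

theorem notMem_of_transGen_last (hb : N.IsBinary_s12 ρ) (hl : N.IsPath l c t)
    (h : TransGen N.arc t s) : s ∉ l :=
  fun hs => hb.acyclic s (h.trans_right (hl.reflTransGen_last hs))

theorem notMem_of_arc_of_mem (hb : N.IsBinary_s12 ρ) (hs : N.arc s c) (hl : N.IsPath l c t)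
    (hl' : N.IsPath l' c' s) (hw : w ∈ l) : w ∉ l' :=
  fun hw' => hb.acyclic s (TransGen.head' hs ((hl.reflTransGen_head hw).trans
    (hl'.reflTransGen_last hw')))

theorem mem_of_arc_of_mem (hb : N.IsBinary_s12 ρ) (hl : N.IsTreePath l c t) (hw : w ∈ l)
    (hwc : w ≠ c) (hu : N.arc u w) : u ∈ l := by
  obtain ⟨x, hx, hxw⟩ := hl.1.exists_arc_of_mem hw hwc
  by_cases hux : u = x
  · exact hux ▸ hx
  · exact absurd (hb.isRet_of_arc_of_arc hu hxw hux) (hl.2 w hw hwc)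

theorem head_mem_or_head_mem (hb : N.IsBinary_s12 ρ) (hl : N.IsTreePath l c t)
    (hl' : N.IsTreePath l' c' t') (hw : w ∈ l) (hw' : w ∈ l') : c ∈ l' ∨ c' ∈ l := by
  refine hl.1.1.induction (fun y => y ∈ l → y ∈ l' → c ∈ l' ∨ c' ∈ l) l ?_ ?_ w hw hw hw'
  · intro x y hxy hx hy hy'
    by_cases hyc : y = c
    · exact .inl (hyc ▸ hy')
    by_cases hyc' : y = c'
    · exact .inr (hyc' ▸ hy)
    exact hx (hb.mem_of_arc_of_mem hl hy hyc hxy) (hb.mem_of_arc_of_mem hl' hy' hyc' hxy)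
  · intro hne _ h'
    exact .inl ((List.head_eq_iff_head?_eq_some hne).2 hl.1.2.1 ▸ h')

theorem exists_isTreePath_isLeaf (hb : N.IsBinary_s12 ρ) (htc : N.TreeChild) (v : N.V) :
    ∃ l x, N.IsTreePath l v x ∧ N.IsLeaf x := by
  have := hb.finite
  have : Std.Irrefl (fun a b : N.V => TransGen N.arc b a) := ⟨fun a h => hb.acyclic a h⟩
  have : IsTrans N.V (fun a b : N.V => TransGen N.arc b a) := ⟨fun _ _ _ h h' => h'.trans h⟩
  have hwf : WellFounded (fun a b : N.V => N.arc b a) :=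
    Subrelation.wf TransGen.single (Finite.wellFounded_of_trans_of_irrefl _)
  induction v using hwf.induction with
  | _ v ih =>
    by_cases hv : N.IsLeaf v
    · exact ⟨[v], v, .singleton v, hv⟩
    obtain ⟨c, hvc, hc⟩ := htc v hv
    obtain ⟨l, x, hl, hx⟩ := ih c hvc
    exact ⟨v :: l, x, hl.cons hvc hc, hx⟩

theorem notMem_of_pendant (hb : N.IsBinary_s12 ρ) (hs : N.arc s c) (hs' : N.arc s' c')
    (hl : N.IsTreePath l c t) (hl' : N.IsTreePath l' c' t') (hcc' : c ≠ c')
    (hst : s ∉ l' ∨ s = t') (hst' : s' ∉ l ∨ s' = t) (hw : w ∈ l) : w ∉ l' := by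
  rcases hst with hst | rfl
  swap
  · exact hb.notMem_of_arc_of_mem hs hl.1 hl'.1 hw
  rcases hst' with hst' | rfl
  swap
  · exact fun hw' => hb.notMem_of_arc_of_mem hs' hl'.1 hl.1 hw' hw
  intro hw'
  rcases hb.head_mem_or_head_mem hl hl' hw hw' with hc | hc'
  · exact hst (hb.mem_of_arc_of_mem hl' hc hcc' hs)
  · exact hst' (hb.mem_of_arc_of_mem hl hc' hcc'.symm hs')

theorem pathSys_of_pendants (hb : N.IsBinary_s12 ρ) {ps : List ((N.V × N.V) × List N.V)}
    (hp : ∀ x ∈ ps, N.IsPendant x.1 x.2) (hc : (ps.map (·.2.head?)).Nodup)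
    (hst : ∀ x ∈ ps, ∀ y ∈ ps, x.1.1 ∉ y.2 ∨ x.1.1 = y.1.2) :
    (ps.map (·.1.2)).Pairwise (· ≠ ·) ∧ N.PathSys (ps.map Prod.fst) := by
  have hd : ps.Pairwise fun x y => ∀ w ∈ x.2, w ∉ y.2 := by
    refine (List.pairwise_map.1 hc).imp_of_mem fun hx hy hxy => ?_
    obtain ⟨c, hs, hl⟩ := hp _ hx
    obtain ⟨c', hs', hl'⟩ := hp _ hy
    refine fun w => hb.notMem_of_pendant hs hs' hl hl' ?_ (hst _ hx _ hy) (hst _ hy _ hx)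
    rintro rfl
    exact hxy (hl.1.2.1.trans hl'.1.2.1.symm)
  refine ⟨List.pairwise_map.2 (hd.imp_of_mem fun hx hy hxy h => ?_), ?_⟩
  · obtain ⟨_, -, hl⟩ := hp _ hx
    obtain ⟨_, -, hl'⟩ := hp _ hy
    exact hxy _ hl.1.last_mem (h ▸ hl'.1.last_mem)
  have := pathSys_of_pairwise (paths := ps.map fun x => (x.1, x.1.1 :: x.2)) ?_
    (List.pairwise_map.2 (hd.imp_of_mem fun hx hy hxy =>
      meet_cons_of_disjoint hxy (hst _ hx _ hy) (hst _ hy _ hx)))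
  · rwa [List.map_map] at this
  · simp only [List.forall_mem_map]
    intro x hx
    obtain ⟨c, hs, hl⟩ := hp x hx
    exact hl.1.cons hs

theorem eq_of_arc_of_arc_of_reflTransGen (hb : N.IsBinary_s12 ρ) (hn : N.Normal) (hu : N.arc u w)
    (hv : N.arc v w) (huv : ReflTransGen N.arc u v) : u = v := by
  by_contra hne
  have avoid : ∀ x, ReflTransGen N.arc x v →
      TransGen (fun a b => N.arc a b ∧ ¬(a = u ∧ b = w)) x w := by
    intro x hx
    induction hx using ReflTransGen.head_induction_on with
    | refl => exact .single ⟨hv, fun h => hne h.1.symm⟩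
    | head hxy hyv ih =>
      exact .head ⟨hxy, fun h => hb.acyclic w (.tail' (h.2 ▸ hyv) hv)⟩ ih
  exact hn.2 u w ⟨hu, hb.isRet_of_arc_of_arc hu hv hne, avoid u huv⟩

theorem ne_of_arc_of_arc_of_transGen (hb : N.IsBinary_s12 ρ) (hn : N.Normal) (hs : N.arc s c)
    (hs' : N.arc s' c') (h : TransGen N.arc s s') : c ≠ c' := by
  rintro rfl
  exact hb.ne_of_transGen h (hb.eq_of_arc_of_arc_of_reflTransGen hn hs hs' h.to_reflTransGen)

section Caterpillar

variable {r q p cA cB c1 c2 c3 c4 x1 x2 x3 x4 : N.V} {lA lB l1 l2 l3 l4 : List N.V}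

theorem caterpillar_pathSys (hb : N.IsBinary_s12 ρ) (hn : N.Normal)
    (hA : N.arc r cA) (hlA : N.IsTreePath lA cA q) (h4 : N.arc r c4) (hl4 : N.IsTreePath l4 c4 x4)
    (hc4 : cA ≠ c4)
    (hB : N.arc q cB) (hlB : N.IsTreePath lB cB p) (h3 : N.arc q c3) (hl3 : N.IsTreePath l3 c3 x3)
    (hc3 : cB ≠ c3)
    (h1 : N.arc p c1) (hl1 : N.IsTreePath l1 c1 x1) (h2 : N.arc p c2) (hl2 : N.IsTreePath l2 c2 x2)
    (hc2 : c1 ≠ c2) :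
    [r, q, p, x1, x2, x3, x4].Pairwise (· ≠ ·) ∧
      N.PathSys [(r, q), (q, p), (p, x1), (p, x2), (q, x3), (r, x4)] := by
  have hrq : TransGen N.arc r q := .head' hA (hlA.1.reflTransGen_head hlA.1.last_mem)
  have hqp : TransGen N.arc q p := .head' hB (hlB.1.reflTransGen_head hlB.1.last_mem)
  have hrp := hrq.trans hqp
  have ne {s s' c c' : N.V} (h : TransGen N.arc s s') (hs : N.arc s c) (hs' : N.arc s' c') :
      c ≠ c' := hb.ne_of_arc_of_arc_of_transGen hn hs hs' h
  have nm {s c t : N.V} {l : List N.V} (hl : N.IsTreePath l c t) (h : TransGen N.arc s c) :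
      s ∉ l := hb.notMem_of_transGen_head hl.1 h
  have rA := nm hlA (.single hA); have r4 := nm hl4 (.single h4)
  have rB := nm hlB (hrq.tail hB); have r3 := nm hl3 (hrq.tail h3)
  have r1 := nm hl1 (hrp.tail h1); have r2 := nm hl2 (hrp.tail h2)
  have qB := nm hlB (.single hB); have q3 := nm hl3 (.single h3)
  have q1 := nm hl1 (hqp.tail h1); have q2 := nm hl2 (hqp.tail h2)
  have p1 := nm hl1 (.single h1); have p2 := nm hl2 (.single h2)
  have pA : p ∉ lA := hb.notMem_of_transGen_last hlA.1 hqp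
  -- `q` ends `lA` and `p` ends `lB`, which are disjoint from the pendant paths beside them.
  have q4 : q ∉ l4 :=
    hb.notMem_of_pendant hA h4 hlA hl4 hc4 (.inl r4) (.inl rA) hlA.1.last_mem
  have p3 : p ∉ l3 :=
    hb.notMem_of_pendant hB h3 hlB hl3 hc3 (.inl q3) (.inl qB) hlB.1.last_mem
  have p4 : p ∉ l4 :=
    hb.notMem_of_pendant hB h4 hlB hl4 (ne hrq h4 hB).symm (.inl q4) (.inl rB) hlB.1.last_mem
  have key := hb.pathSys_of_pendants (ps := [((r, q), lA), ((q, p), lB),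
    ((p, x1), l1), ((p, x2), l2), ((q, x3), l3), ((r, x4), l4)]) ?_ ?_ ?_
  · refine ⟨.cons ?_ key.1, key.2⟩
    simp only [List.mem_cons, List.not_mem_nil, or_false]
    rintro x (rfl | rfl | rfl | rfl | rfl | rfl)
    exacts [hb.ne_of_transGen hrq, hb.ne_of_transGen hrp, fun h => r1 (h ▸ hl1.1.last_mem),
      fun h => r2 (h ▸ hl2.1.last_mem), fun h => r3 (h ▸ hl3.1.last_mem),
      fun h => r4 (h ▸ hl4.1.last_mem)]
  · simp only [List.forall_mem_cons, List.not_mem_nil, IsEmpty.forall_iff, implies_true, and_true]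
    exact ⟨⟨cA, hA, hlA⟩, ⟨cB, hB, hlB⟩, ⟨c1, h1, hl1⟩, ⟨c2, h2, hl2⟩, ⟨c3, h3, hl3⟩, ⟨c4, h4, hl4⟩⟩
  · simp only [List.map_cons, List.map_nil, hlA.1.2.1, hlB.1.2.1, hl1.1.2.1, hl2.1.2.1, hl3.1.2.1,
      hl4.1.2.1, List.nodup_cons, List.mem_cons, Option.some.injEq, List.not_mem_nil, or_false,
      List.nodup_nil, and_true, not_or, not_false_eq_true]
    exact ⟨⟨ne hrq hA hB, ne hrp hA h1, ne hrp hA h2, ne hrq hA h3, hc4⟩,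
      ⟨ne hqp hB h1, ne hqp hB h2, hc3, (ne hrq h4 hB).symm⟩,
      ⟨hc2, (ne hqp h3 h1).symm, (ne hrp h4 h1).symm⟩,
      ⟨(ne hqp h3 h2).symm, (ne hrp h4 h2).symm⟩, (ne hrq h4 h3).symm⟩
  · simp only [List.forall_mem_cons, List.not_mem_nil, IsEmpty.forall_iff, implies_true, and_true]
    simp [rA, r4, rB, r3, r1, r2, qB, q3, q1, q2, q4, pA, p1, p2, p3, p4]

end Caterpillar

theorem exists_displaysQuad (hb : N.IsBinary_s12 ρ) (hn : N.Normal) {X : Finset α} {r q p : N.V}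
    (hX : ∀ v, N.IsLeaf v → ∃ x ∈ X, N.leafMap x = v) (hrq : N.TreeStep r q)
    (hqp : N.TreeStep q p) : ∃ x₁ x₂ x₃ x₄, N.DisplaysQuad X x₁ x₂ x₃ x₄ := by
  obtain ⟨hr, hq, lA, cA, hA, hlA⟩ := hrq
  obtain ⟨-, hp, lB, cB, hB, hlB⟩ := hqp
  obtain ⟨c4, h4, hc4⟩ := exists_arc_ne_of_outDeg_eq_two hr cA
  obtain ⟨c3, h3, hc3⟩ := exists_arc_ne_of_outDeg_eq_two hq cB
  obtain ⟨c1, h1, -⟩ := exists_arc_ne_of_outDeg_eq_two hp p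
  obtain ⟨c2, h2, hc2⟩ := exists_arc_ne_of_outDeg_eq_two hp c1
  have leaf (c : N.V) : ∃ l y, y ∈ X ∧ N.IsTreePath l c (N.leafMap y) := by
    obtain ⟨l, x, hl, hx⟩ := hb.exists_isTreePath_isLeaf hn.1 c
    obtain ⟨y, hy, rfl⟩ := hX x hx
    exact ⟨l, y, hy, hl⟩
  obtain ⟨l1, y1, hy1, hl1⟩ := leaf c1
  obtain ⟨l2, y2, hy2, hl2⟩ := leaf c2
  obtain ⟨l3, y3, hy3, hl3⟩ := leaf c3
  obtain ⟨l4, y4, hy4, hl4⟩ := leaf c4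
  obtain ⟨hne, hsys⟩ :=
    hb.caterpillar_pathSys hn hA hlA h4 hl4 hc4.symm hB hlB h3 hl3 hc3.symm h1 hl1 h2 hl2 hc2.symm
  have hy : [y1, y2, y3, y4].Pairwise (· ≠ ·) :=
    hne.of_cons.of_cons.of_cons.of_map N.leafMap fun _ _ h h' => h (congrArg _ h')
  simp only [List.pairwise_cons, List.forall_mem_cons, List.not_mem_nil, IsEmpty.forall_iff,
    implies_true, List.Pairwise.nil, and_true] at hy
  obtain ⟨⟨h12, h13, h14⟩, ⟨h23, h24⟩, h34⟩ := hy
  exact ⟨y1, y2, y3, y4, hy1, hy2, hy3, hy4, h12, h13, h14, h23, h24, h34, r, q, p, hne, hsys⟩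

theorem isTreeVert_of_arc_of_isRet (hb : N.IsBinary_s12 ρ) (hn : N.Normal) (hu : N.arc u w)
    (hw : N.IsRet w) : N.IsTreeVert u := by
  rcases hb.degrees u with ⟨h₀, -⟩ | ⟨-, h₀⟩ | h | ⟨h₂, -⟩
  · obtain ⟨z, hz, hzu⟩ := Set.exists_ne_of_one_lt_ncard (s := {x | N.arc x w})
      (by unfold IsRet inDeg at hw; omega) u
    have hρz : ReflTransGen N.arc u z := hb.eq_root_of_inDeg_eq_zero h₀ ▸ hb.isRoot.2 z
    exact absurd (hb.eq_of_arc_of_arc_of_reflTransGen hn hu hz hρz) hzu.symm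
  · exact absurd h₀ (hb.not_isLeaf_of_arc hu)
  · exact h
  · obtain ⟨c, hc, hcr⟩ := hn.1 u (hb.not_isLeaf_of_arc hu)
    exact absurd (hb.eq_of_arc_of_arc_of_isRet h₂ hu hc ▸ hw) hcr

theorem treeStep_of_arc_of_arc (hb : N.IsBinary_s12 ρ) (hn : N.Normal) (hs : N.arc s u)
    (hu : N.arc u t) (hur : N.IsRet u) (ht : N.outDeg t = 2) : N.TreeStep s t :=
  ⟨(hb.isTreeVert_of_arc_of_isRet hn hs hur).2, ht, [u, t], u, hs,
    (IsTreePath.singleton t).cons hu fun htr => by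
      have := hb.outDeg_eq_one_of_isRet htr
      omega⟩

theorem exists_treeStep_of_isTreeVert (hb : N.IsBinary_s12 ρ) (hn : N.Normal)
    (ht : N.IsTreeVert t) : ∃ s, N.TreeStep s t := by
  obtain ⟨u, hu⟩ := exists_arc_of_inDeg_ne_zero (ht.1 ▸ one_ne_zero)
  rcases hb.degrees u with ⟨-, h₂⟩ | ⟨-, h₀⟩ | ⟨-, h₂⟩ | ⟨hr, -⟩
  · exact ⟨u, h₂, ht.2, [t], t, hu, .singleton t⟩
  · exact absurd h₀ (hb.not_isLeaf_of_arc hu)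
  · exact ⟨u, h₂, ht.2, [t], t, hu, .singleton t⟩
  · obtain ⟨s, hs⟩ := exists_arc_of_inDeg_ne_zero (hr ▸ two_ne_zero)
    exact ⟨s, hb.treeStep_of_arc_of_arc hn hs hu hr ht.2⟩

theorem arc_root_of_isTreeVert (hb : N.IsBinary_s12 ρ) (hn : N.Normal)
    (hno : ¬ ∃ r q p, N.TreeStep r q ∧ N.TreeStep q p) (ht : N.IsTreeVert t) : N.arc ρ t := by
  obtain ⟨u, hu⟩ := exists_arc_of_inDeg_ne_zero (ht.1 ▸ one_ne_zero)
  rcases hb.degrees u with ⟨h₀, -⟩ | ⟨-, h₀⟩ | hut | ⟨hr, -⟩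
  · exact hb.eq_root_of_inDeg_eq_zero h₀ ▸ hu
  · exact absurd h₀ (hb.not_isLeaf_of_arc hu)
  · obtain ⟨r, hr⟩ := hb.exists_treeStep_of_isTreeVert hn hut
    exact absurd ⟨r, u, t, hr, hut.2, ht.2, [t], t, hu, .singleton t⟩ hno
  · obtain ⟨s, hs⟩ := exists_arc_of_inDeg_ne_zero (hr ▸ two_ne_zero)
    obtain ⟨r, hrs⟩ :=
      hb.exists_treeStep_of_isTreeVert hn (hb.isTreeVert_of_arc_of_isRet hn hs hr)
    exact absurd ⟨r, s, t, hrs, hb.treeStep_of_arc_of_arc hn hs hu hr ht.2⟩ hno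

theorem ncard_isTreeVert_le_two (hb : N.IsBinary_s12 ρ) (hn : N.Normal)
    (hno : ¬ ∃ r q p, N.TreeStep r q ∧ N.TreeStep q p) : {v | N.IsTreeVert v}.ncard ≤ 2 := by
  have := hb.finite
  exact hb.outDeg_root ▸ Set.ncard_le_ncard fun _ ht => hb.arc_root_of_isTreeVert hn hno ht

theorem eq_of_isRet_of_isRet (hb : N.IsBinary_s12 ρ) (hn : N.Normal)
    (hno : ¬ ∃ r q p, N.TreeStep r q ∧ N.TreeStep q p) (hv : N.IsRet v) (hw : N.IsRet w) :
    v = w := by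
  have := hb.finite
  have parents {h : N.V} (hh : N.IsRet h) : {u | N.arc u h} = {u | N.arc ρ u} :=
    Set.eq_of_subset_of_ncard_le
      (fun u hu => hb.arc_root_of_isTreeVert hn hno (hb.isTreeVert_of_arc_of_isRet hn hu hh))
      (hb.outDeg_root.trans hh.symm).le
  by_contra hvw
  obtain ⟨u, hu⟩ := exists_arc_of_inDeg_ne_zero (hv ▸ two_ne_zero)
  have hu' : u ∈ {u | N.arc u w} := parents hw ▸ parents hv ▸ hu
  obtain ⟨c, hc, hcr⟩ := hn.1 u (hb.not_isLeaf_of_arc hu)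
  have hcard : ({v, w, c} : Set N.V).ncard = 3 :=
    Set.ncard_eq_three.2 ⟨v, w, c, hvw, fun h => hcr (h ▸ hv), fun h => hcr (h ▸ hw), rfl⟩
  have hle : ({v, w, c} : Set N.V).ncard ≤ N.outDeg u :=
    Set.ncard_le_ncard
      (Set.insert_subset hu (Set.insert_subset hu' (Set.singleton_subset_iff.2 hc)))
  have := hb.outDeg_le_two u
  omega

end IsBinary_s12

end PhyloNet

open PhyloNet in
/-- A normal network with at least one reticulation and four
leaves, or at least two reticulations, or at least five leaves, displays at
least one quad. -/
theorem normal_displays_quad {α : Type} (X : Finset α) (N : PhyloNet α)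
    (hN : N.IsNetworkOn X) (hnorm : N.Normal)
    (h : ((∃ v : N.V, N.IsRet v) ∧ 4 ≤ X.card) ∨
         (∃ v w : N.V, v ≠ w ∧ N.IsRet v ∧ N.IsRet w) ∨
         5 ≤ X.card) :
    ∃ w x y z : α, N.DisplaysQuad X w x y z := by
  rcases hN.degrees with ⟨hX, hV⟩ | hdeg
  · rcases h with ⟨-, hX4⟩ | ⟨v, w, hvw, -⟩ | hX5
    · omega
    · exact absurd (Subsingleton.elim v w) hvw
    · omega
  obtain ⟨ρ, hρ⟩ := hN.rooted
  have hb : N.IsBinary_s12 ρ := ⟨hN.finiteV, hN.acyclic, hρ, hdeg⟩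
  by_cases hchain : ∃ r q p, N.TreeStep r q ∧ N.TreeStep q p
  · obtain ⟨r, q, p, hrq, hqp⟩ := hchain
    exact hb.exists_displaysQuad hnorm hN.leaf_surj hrq hqp
  have hcount := hb.ncard_isLeaf_add_ncard_isRet
  have htree := hb.ncard_isTreeVert_le_two hnorm hchain
  rw [hN.ncard_isLeaf] at hcount
  rcases h with ⟨⟨v, hv⟩, hX4⟩ | ⟨v, w, hvw, hv, hw⟩ | hX5
  · have := hb.finite
    have : 0 < {v | N.IsRet v}.ncard := (Set.ncard_pos (Set.toFinite _)).2 ⟨v, hv⟩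
    omega
  · exact absurd (hb.eq_of_isRet_of_isRet hnorm hchain hv hw) hvw
  · omega
end
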